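/- arXiv:2205.12021 — 2 statements merged into one kernel-verified Lean document; each statement's English description precedes it below -/
import Mathlib

section
/- Let T : ℝ^s → ℝ^s be a C¹ diffeomorphism such that T is Lipschitz continuous with constant K and T⁻¹ is Lipschitz continuous with constant L, and let P_Z be the standard Gaussian measure on ℝ^s with density p_Z(z) = (2π)^{−s/2} exp(−‖z‖²/2). Denote by p_{T_#P_Z}(p) = p_Z(T⁻¹(p)) · |det D(T⁻¹)(p)| the density of the pushforward measure T_# P_Z. Then for every p ∈ ℝ^s, (1/(L^s K^s)) · N(p | T(0), L^{−2} I) ≤ p_{T_#P_Z}(p) ≤ L^s K^s · N(p | T(0), K² I), where N(p | m, σ² I) = (2πσ²)^{−s/2} exp(−‖p − m‖²/(2σ²)) denotes the density of the Gaussian distribution on ℝ^s with mean m and covariance σ² I. -/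
/-! Since `N(p | m, σ² I) = σ^{-s} p_Z((p - m) / σ)`, the two bounds compare `p_Z(T⁻¹ p)` with
`p_Z(L (p - T 0))` and `p_Z((p - T 0) / K)`. As `T⁻¹ (T 0) = 0`, the Lipschitz bounds give
`‖p - T 0‖ / K ≤ ‖T⁻¹ p‖ ≤ L ‖p - T 0‖`, and `p_Z` decreases with the norm. For the Jacobian,
`|det A| ≤ ‖A‖ ^ s` (`A` maps the unit ball into the ball of radius `‖A‖`, and scales volumes by
`|det A|`) gives `|det D(T⁻¹)(p)| ≤ L ^ s`, while the chain rule `DT(T⁻¹ p) ∘ D(T⁻¹)(p) = id`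
gives `|det D(T⁻¹)(p)| ≥ K ^ (-s)`. -/

open MeasureTheory

/-- The density of the standard Gaussian measure on `ℝ^s`:
`p_Z(z) = (2π)^{-s/2} exp(-‖z‖²/2)`. -/
noncomputable def stdGaussianDensity (s : ℕ) (z : EuclideanSpace ℝ (Fin s)) : ℝ :=
  (2 * Real.pi) ^ (-(s : ℝ) / 2) * Real.exp (-‖z‖ ^ 2 / 2)

/-- The density `N(p | m, σ²I) = (2πσ²)^{-s/2} exp(-‖p-m‖²/(2σ²))` of the isotropic
Gaussian on `ℝ^s` with mean `m` and variance `v = σ²`. -/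
noncomputable def gaussDensity (s : ℕ) (m : EuclideanSpace ℝ (Fin s)) (v : ℝ)
    (p : EuclideanSpace ℝ (Fin s)) : ℝ :=
  (2 * Real.pi * v) ^ (-(s : ℝ) / 2) * Real.exp (-‖p - m‖ ^ 2 / (2 * v))

open Module Metric

theorem LipschitzWith.pos_of_injective {α β : Type*} [PseudoEMetricSpace α] [EMetricSpace β]
    [Nontrivial α] {K : NNReal} {f : α → β} (hf : LipschitzWith K f)
    (hinj : Function.Injective f) : 0 < K := by
  rw [pos_iff_ne_zero]
  rintro rfl
  obtain ⟨x, y, hxy⟩ := exists_pair_ne α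
  exact hxy (hinj ((LipschitzWith.zero_iff f).1 hf x y))

section Determinant

variable {E : Type*} [NormedAddCommGroup E] [NormedSpace ℝ E] [FiniteDimensional ℝ E]

theorem ContinuousLinearMap.abs_det_le_norm_pow (A : E →L[ℝ] E) :
    |A.det| ≤ ‖A‖ ^ finrank ℝ E := by
  let _ : MeasurableSpace E := borel E
  have : BorelSpace E := ⟨rfl⟩
  set μ : Measure E := Measure.addHaar
  have himage : A '' closedBall 0 1 ⊆ closedBall 0 ‖A‖ := by
    rintro _ ⟨x, hx, rfl⟩
    rw [mem_closedBall_zero_iff] at hx ⊢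
    simpa using A.le_opNorm_of_le hx
  have hvol := measure_mono (μ := μ) himage
  rw [Measure.addHaar_image_continuousLinearMap, Measure.addHaar_closedBall' μ 0 (norm_nonneg A),
    ENNReal.mul_le_mul_iff_left (measure_closedBall_pos μ 0 one_pos).ne'
      measure_closedBall_lt_top.ne,
    ENNReal.ofReal_le_ofReal_iff (by positivity)] at hvol
  exact hvol

theorem abs_det_fderiv_le_pow {K : NNReal} {f : E → E} (hf : LipschitzWith K f) (x : E) :
    |(fderiv ℝ f x).det| ≤ (K : ℝ) ^ finrank ℝ E :=
  (fderiv ℝ f x).abs_det_le_norm_pow.trans <|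
    pow_le_pow_left₀ (norm_nonneg _) (norm_fderiv_le_of_lipschitz ℝ hf) _

theorem one_le_pow_mul_abs_det_fderiv_of_rightInverse {K : NNReal} {T Tinv : E → E}
    (hT : LipschitzWith K T) (hright : Function.RightInverse Tinv T) {p : E}
    (hTd : DifferentiableAt ℝ T (Tinv p)) (hTinvd : DifferentiableAt ℝ Tinv p) :
    1 ≤ (K : ℝ) ^ finrank ℝ E * |(fderiv ℝ Tinv p).det| := by
  have hchain : (fderiv ℝ T (Tinv p)).comp (fderiv ℝ Tinv p) = ContinuousLinearMap.id ℝ E := by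
    rw [← fderiv_comp p hTd hTinvd, show T ∘ Tinv = id from funext hright, fderiv_id]
  have hdet : (fderiv ℝ T (Tinv p)).det * (fderiv ℝ Tinv p).det = 1 := by
    simpa [ContinuousLinearMap.det, LinearMap.det_comp] using
      congrArg ContinuousLinearMap.det hchain
  calc (1 : ℝ) = |(fderiv ℝ T (Tinv p)).det| * |(fderiv ℝ Tinv p).det| := by
        rw [← abs_mul, hdet, abs_one]
    _ ≤ (K : ℝ) ^ finrank ℝ E * |(fderiv ℝ Tinv p).det| := by
        gcongr
        exact abs_det_fderiv_le_pow hT _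

end Determinant

section Gaussian

variable {s : ℕ}

theorem stdGaussianDensity_nonneg (z : EuclideanSpace ℝ (Fin s)) :
    0 ≤ stdGaussianDensity s z := by
  unfold stdGaussianDensity
  positivity

theorem stdGaussianDensity_le_of_norm_le {z w : EuclideanSpace ℝ (Fin s)} (h : ‖z‖ ≤ ‖w‖) :
    stdGaussianDensity s w ≤ stdGaussianDensity s z := by
  unfold stdGaussianDensity
  gcongr

theorem gaussDensity_sq_eq {σ : ℝ} (hσ : 0 < σ) (m p : EuclideanSpace ℝ (Fin s)) :
    gaussDensity s m (σ ^ 2) p = (σ ^ s)⁻¹ * stdGaussianDensity s (σ⁻¹ • (p - m)) := by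
  unfold gaussDensity stdGaussianDensity
  have hpow : (σ ^ 2) ^ (-(s : ℝ) / 2) = (σ ^ s)⁻¹ := by
    rw [← Real.rpow_natCast σ 2, ← Real.rpow_mul hσ.le, ← Real.rpow_natCast σ s,
      ← Real.rpow_neg hσ.le]
    congr 1
    push_cast
    ring
  rw [Real.mul_rpow (by positivity) (by positivity), hpow, norm_smul, Real.norm_eq_abs,
    abs_inv, abs_of_pos hσ]
  field_simp

end Gaussian

/-- Lemma 2 of the paper: for a `C¹` diffeomorphism `T` of `ℝ^s` with
`Lip(T) ≤ K` and `Lip(T⁻¹) ≤ L`, the density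
`p_{T_#P_Z}(p) = p_Z(T⁻¹ p)·|det D(T⁻¹)(p)|` of the pushforward of the standard
Gaussian satisfies
`(1/(L^s K^s)) · N(p | T 0, L⁻² I) ≤ p_{T_#P_Z}(p) ≤ L^s K^s · N(p | T 0, K² I)`. -/
theorem stmt_5 (s : ℕ) (K L : NNReal)
    (T Tinv : EuclideanSpace ℝ (Fin s) → EuclideanSpace ℝ (Fin s))
    (hleft : Function.LeftInverse Tinv T) (hright : Function.RightInverse Tinv T)
    (hT : ContDiff ℝ 1 T) (hTinv : ContDiff ℝ 1 Tinv)
    (hK : LipschitzWith K T) (hL : LipschitzWith L Tinv)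
    (p : EuclideanSpace ℝ (Fin s)) :
    (1 / ((L : ℝ) ^ s * (K : ℝ) ^ s)) * gaussDensity s (T 0) (((L : ℝ) ^ 2)⁻¹) p
        ≤ stdGaussianDensity s (Tinv p) * |(fderiv ℝ Tinv p).det| ∧
      stdGaussianDensity s (Tinv p) * |(fderiv ℝ Tinv p).det|
        ≤ (L : ℝ) ^ s * (K : ℝ) ^ s * gaussDensity s (T 0) ((K : ℝ) ^ 2) p := by
  rcases Nat.eq_zero_or_pos s with rfl | hs
  · have hnorm (z : EuclideanSpace ℝ (Fin 0)) : ‖z‖ = 0 := by simp [Subsingleton.elim z 0]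
    simp [stdGaussianDensity, gaussDensity, hnorm, LinearMap.det_eq_one_of_subsingleton]
  have : NeZero s := ⟨hs.ne'⟩
  have hK0 : (0 : ℝ) < K := hK.pos_of_injective hleft.injective
  have hL0 : (0 : ℝ) < L := hL.pos_of_injective hright.injective
  have hdet_le : |(fderiv ℝ Tinv p).det| ≤ (L : ℝ) ^ s := by
    simpa using abs_det_fderiv_le_pow hL p
  have hdet_ge : ((K : ℝ) ^ s)⁻¹ ≤ |(fderiv ℝ Tinv p).det| := by
    rw [inv_le_iff_one_le_mul₀' (by positivity)]
    simpa using one_le_pow_mul_abs_det_fderiv_of_rightInverse hK hright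
      (hT.differentiable one_ne_zero _) (hTinv.differentiable one_ne_zero _)
  have hnorm_le : ‖Tinv p‖ ≤ ‖(L : ℝ) • (p - T 0)‖ := by
    simpa [hleft 0, norm_smul] using hL.norm_sub_le p (T 0)
  have hnorm_ge : ‖(K : ℝ)⁻¹ • (p - T 0)‖ ≤ ‖Tinv p‖ := by
    rw [norm_smul, norm_inv, Real.norm_of_nonneg hK0.le, inv_mul_le_iff₀ hK0]
    simpa [hright p] using hK.norm_sub_le (Tinv p) 0
  rw [← inv_pow, gaussDensity_sq_eq (inv_pos.2 hL0), gaussDensity_sq_eq hK0, inv_inv, inv_pow,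
    inv_inv]
  constructor
  · calc _ = ((K : ℝ) ^ s)⁻¹ * stdGaussianDensity s ((L : ℝ) • (p - T 0)) := by field_simp
      _ ≤ |(fderiv ℝ Tinv p).det| * stdGaussianDensity s (Tinv p) :=
          mul_le_mul hdet_ge (stdGaussianDensity_le_of_norm_le hnorm_le)
            (stdGaussianDensity_nonneg _) (abs_nonneg _)
      _ = _ := mul_comm _ _
  · calc _ ≤ stdGaussianDensity s ((K : ℝ)⁻¹ • (p - T 0)) * (L : ℝ) ^ s :=
          mul_le_mul (stdGaussianDensity_le_of_norm_le hnorm_ge) hdet_le (abs_nonneg _)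
            (stdGaussianDensity_nonneg _)
      _ = _ := by field_simp
end

section
/- Let d, s, N_p be positive natural numbers with s ≤ d, and for each i ∈ {1,…,N_p} let τ_i : Fin s → Fin d be an injection with associated patch-extraction map P_i : (Fin d → ℝ) → (Fin s → ℝ), (P_i x)_j = x_{τ_i(j)}, and assume that the ranges of τ_1,…,τ_{N_p} cover Fin d (every pixel belongs to at least one patch). Let T : ℝ^s → ℝ^s be a C¹ diffeomorphism with Lip(T) < ∞ and Lip(T⁻¹) < ∞, let P_Z be the standard Gaussian measure on ℝ^s with density p_Z(z) = (2π)^{−s/2} exp(−‖z‖²/2), and let p_{T_#P_Z}(p) = p_Z(T⁻¹(p)) · |det D(T⁻¹)(p)| be the density of T_# P_Z. Define patchNR(x) = (1/s) · Σ_{i=1}^{N_p} (− log p_{T_#P_Z}(P_i(x))) for x ∈ Fin d → ℝ. Then for every ρ > 0 the function φ(x) = exp(−ρ · patchNR(x)) belongs to L¹ with respect to Lebesgue measure on Fin d → ℝ, i.e. ∫_{ℝ^d} exp(−ρ · patchNR(x)) dx < ∞. -/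
open MeasureTheory

/-- The density `p ↦ p_Z(T⁻¹ p)·|det D(T⁻¹)(p)|` of the pushforward `T_# P_Z` of the
standard Gaussian under a `C¹` diffeomorphism `T` with inverse `Tinv`. -/
noncomputable def pushforwardDensity (s : ℕ)
    (Tinv : EuclideanSpace ℝ (Fin s) → EuclideanSpace ℝ (Fin s))
    (p : EuclideanSpace ℝ (Fin s)) : ℝ :=
  stdGaussianDensity s (Tinv p) * |(fderiv ℝ Tinv p).det|

/-- The patch normalizing flow regularizer
`patchNR x = (1/s) ∑ i, -log p_{T_#P_Z}(P_i x)`, with patches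
`P_i x = fun j => x (τ i j)` viewed as points of `ℝ^s = EuclideanSpace ℝ (Fin s)`. -/
noncomputable def patchNR (d s Np : ℕ) (τ : Fin Np → Fin s → Fin d)
    (Tinv : EuclideanSpace ℝ (Fin s) → EuclideanSpace ℝ (Fin s))
    (x : Fin d → ℝ) : ℝ :=
  (1 / (s : ℝ)) *
    ∑ i : Fin Np,
      -Real.log (pushforwardDensity s Tinv
        ((WithLp.equiv 2 (Fin s → ℝ)).symm fun j => x (τ i j)))

/-!
The density of `T_# P_Z` has Gaussian decay: since `T` is Lipschitz, `‖p‖ ≤ K ‖T⁻¹ p‖ + ‖T 0‖`,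
so `p_Z(T⁻¹ p) ≤ C exp(-c ‖p‖²)`, while `|det D(T⁻¹)|` is bounded because `‖D(T⁻¹)‖ ≤ Lip(T⁻¹)`,
and it does not vanish because `T ∘ T⁻¹ = id`. Hence `-log p_{T_#P_Z}(y) ≥ c ‖y‖² - A`. Summing
over the patches and using that they cover every pixel gives
`patchNR x ≥ (c ‖x‖² - N_p A) / s`, so `exp(-ρ patchNR)` is dominated by a Gaussian on `ℝ^d`.
-/

open Function NNReal

theorem Fintype.sum_le_sum_comp_of_surjective {α β M : Type*} [Fintype α] [Fintype β]
    [DecidableEq α] [AddCommMonoid M] [PartialOrder M] [IsOrderedAddMonoid M]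
    {φ : β → α} (hφ : Surjective φ) {f : α → M} (hf : 0 ≤ f) :
    ∑ a, f a ≤ ∑ b, f (φ b) := by
  rw [← Finset.sum_fiberwise Finset.univ φ]
  gcongr with a
  obtain ⟨b, rfl⟩ := hφ a
  exact Finset.single_le_sum (f := fun b' => f (φ b')) (fun _ _ => hf _) (by simp)

theorem LipschitzWith.norm_le_mul_norm_add {E F : Type*} [SeminormedAddCommGroup E]
    [SeminormedAddCommGroup F] {K : ℝ≥0} {f : E → F} (hf : LipschitzWith K f) (x : E) :
    ‖f x‖ ≤ K * ‖x‖ + ‖f 0‖ :=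
  calc ‖f x‖ ≤ ‖f x - f 0‖ + ‖f 0‖ := norm_le_norm_sub_add _ _
    _ ≤ K * ‖x‖ + ‖f 0‖ := by gcongr; simpa using hf.norm_sub_le x 0

theorem ContinuousLinearMap.exists_abs_det_le_of_norm_le {E : Type*} [NormedAddCommGroup E]
    [NormedSpace ℝ E] [FiniteDimensional ℝ E] (r : ℝ) :
    ∃ B, ∀ f : E →L[ℝ] E, ‖f‖ ≤ r → |f.det| ≤ B := by
  obtain ⟨B, hB⟩ := (isCompact_closedBall (0 : E →L[ℝ] E) r).exists_bound_of_continuousOn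
    ContinuousLinearMap.continuous_det.continuousOn
  exact ⟨B, fun f hf => hB f (by simpa using hf)⟩

theorem det_fderiv_ne_zero_of_leftInverse {𝕜 E : Type*} [NontriviallyNormedField 𝕜]
    [NormedAddCommGroup E] [NormedSpace 𝕜 E] {f g : E → E} {x : E} (h : LeftInverse f g)
    (hf : DifferentiableAt 𝕜 f (g x)) (hg : DifferentiableAt 𝕜 g x) :
    (fderiv 𝕜 g x).det ≠ 0 := by
  have hcomp : (fderiv 𝕜 f (g x)).comp (fderiv 𝕜 g x) = ContinuousLinearMap.id 𝕜 E := by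
    have hfg : HasFDerivAt (f ∘ g) ((fderiv 𝕜 f (g x)).comp (fderiv 𝕜 g x)) x :=
      hf.hasFDerivAt.comp x hg.hasFDerivAt
    rw [show f ∘ g = id from funext h] at hfg
    exact hfg.unique (hasFDerivAt_id x)
  refine right_ne_zero_of_mul_eq_one (a := (fderiv 𝕜 f (g x)).det) ?_
  simpa [ContinuousLinearMap.det, LinearMap.det_comp] using
    congrArg (fun A : E →L[𝕜] E => LinearMap.det (A : E →ₗ[𝕜] E)) hcomp

section PushforwardDensity

variable {s : ℕ} {T Tinv : EuclideanSpace ℝ (Fin s) → EuclideanSpace ℝ (Fin s)}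

theorem exists_log_pushforwardDensity_le {K L : ℝ≥0} (hright : RightInverse Tinv T)
    (hT : Differentiable ℝ T) (hTinv : Differentiable ℝ Tinv) (hK : LipschitzWith K T)
    (hL : LipschitzWith L Tinv) :
    ∃ A c : ℝ, 0 < c ∧ ∀ p, Real.log (pushforwardDensity s Tinv p) ≤ A - c * ‖p‖ ^ 2 := by
  obtain ⟨B, hB⟩ :=
    ContinuousLinearMap.exists_abs_det_le_of_norm_le (E := EuclideanSpace ℝ (Fin s)) L
  -- `K + 1` rather than `K`, so that we may divide by it
  set K' : ℝ := K + 1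
  have hK' : 0 < K' := by positivity
  refine ⟨Real.log ((2 * Real.pi) ^ (-(s : ℝ) / 2)) + ‖T 0‖ ^ 2 / (2 * K' ^ 2) + Real.log B,
    1 / (4 * K' ^ 2), by positivity, fun p => ?_⟩
  have hdet : 0 < |(fderiv ℝ Tinv p).det| :=
    abs_pos.2 (det_fderiv_ne_zero_of_leftInverse hright (hT (Tinv p)) (hTinv p))
  have hlog_det : Real.log |(fderiv ℝ Tinv p).det| ≤ Real.log B :=
    Real.log_le_log hdet (hB _ (norm_fderiv_le_of_lipschitz ℝ hL))
  have hnorm : ‖p‖ ≤ K' * ‖Tinv p‖ + ‖T 0‖ := by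
    simpa [hright p, K'] using
      (hK.weaken (le_self_add : K ≤ K + 1)).norm_le_mul_norm_add (Tinv p)
  have hgauss : 1 / (4 * K' ^ 2) * ‖p‖ ^ 2 ≤ ‖Tinv p‖ ^ 2 / 2 + ‖T 0‖ ^ 2 / (2 * K' ^ 2) := by
    have hsq : ‖p‖ ^ 2 ≤ 2 * ((K' * ‖Tinv p‖) ^ 2 + ‖T 0‖ ^ 2) :=
      (pow_le_pow_left₀ (norm_nonneg p) hnorm 2).trans add_sq_le
    rw [div_mul_eq_mul_div, div_le_iff₀ (by positivity)]
    field_simp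
    nlinarith
  unfold pushforwardDensity stdGaussianDensity
  rw [Real.log_mul (by positivity) hdet.ne', Real.log_mul (by positivity) (by positivity),
    Real.log_exp]
  linarith

theorem continuous_pushforwardDensity (hTinv : ContDiff ℝ 1 Tinv) :
    Continuous (pushforwardDensity s Tinv) := by
  unfold pushforwardDensity stdGaussianDensity
  have hdet : Continuous fun p => |(fderiv ℝ Tinv p).det| :=
    (ContinuousLinearMap.continuous_det.comp (hTinv.continuous_fderiv one_ne_zero)).abs
  have := hTinv.continuous
  fun_prop

end PushforwardDensity

theorem sum_sq_le_sum_sum_sq_of_cover {d s Np : ℕ} (τ : Fin Np → Fin s → Fin d)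
    (hcover : ∀ k, ∃ i j, τ i j = k) (x : Fin d → ℝ) :
    ∑ k, x k ^ 2 ≤ ∑ i, ∑ j, x (τ i j) ^ 2 := by
  classical
  rw [← Fintype.sum_prod_type']
  exact Fintype.sum_le_sum_comp_of_surjective (φ := fun ij : Fin Np × Fin s => τ ij.1 ij.2)
    (fun k => by simpa using hcover k) (fun k => sq_nonneg (x k))

theorem integrable_exp_sum_comp_patch {d s Np : ℕ} (τ : Fin Np → Fin s → Fin d)
    (hcover : ∀ k, ∃ i j, τ i j = k) {g : EuclideanSpace ℝ (Fin s) → ℝ} (hg : Measurable g)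
    {A c : ℝ} (hc : 0 < c) (hgle : ∀ y, g y ≤ A - c * ‖y‖ ^ 2) :
    Integrable (fun x : Fin d → ℝ =>
      Real.exp (∑ i, g ((WithLp.equiv 2 (Fin s → ℝ)).symm fun j => x (τ i j)))) volume := by
  have hmajor : Integrable (fun x : Fin d → ℝ =>
      Real.exp (Np * A) * ∏ k, Real.exp (-c * x k ^ 2)) volume :=
    (Integrable.fintype_prod (f := fun _ t => Real.exp (-c * t ^ 2))
      fun _ => integrable_exp_neg_mul_sq hc).const_mul _
  refine hmajor.mono' ?_ (Filter.Eventually.of_forall fun x => ?_)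
  · have hpatch (i : Fin Np) : Continuous fun x : Fin d → ℝ =>
        (WithLp.equiv 2 (Fin s → ℝ)).symm fun j => x (τ i j) :=
      (PiLp.continuous_toLp _ _).comp (continuous_pi fun j => continuous_apply _)
    exact (Real.measurable_exp.comp (Finset.measurable_sum _ fun i _ =>
      hg.comp (hpatch i).measurable)).aestronglyMeasurable
  rw [Real.norm_eq_abs, Real.abs_exp, ← Real.exp_sum, ← Real.exp_add, Real.exp_le_exp]
  calc ∑ i, g ((WithLp.equiv 2 (Fin s → ℝ)).symm fun j => x (τ i j))
      ≤ ∑ i : Fin Np, (A - c * ∑ j, x (τ i j) ^ 2) := by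
        gcongr with i
        simpa [EuclideanSpace.real_norm_sq_eq] using hgle _
    _ = Np * A - c * ∑ i, ∑ j, x (τ i j) ^ 2 := by
        simp [Finset.sum_sub_distrib, Finset.mul_sum]
    _ ≤ Np * A - c * ∑ k, x k ^ 2 := by
        gcongr
        exact sum_sq_le_sum_sum_sq_of_cover τ hcover x
    _ = Np * A + ∑ k, -c * x k ^ 2 := by
        simp only [Finset.mul_sum, neg_mul, Finset.sum_neg_distrib]; ring

theorem stmt_6_general (d s Np : ℕ) (hs : 0 < s)
    (τ : Fin Np → Fin s → Fin d)
    (hcover : ∀ k : Fin d, ∃ i j, τ i j = k)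
    (T Tinv : EuclideanSpace ℝ (Fin s) → EuclideanSpace ℝ (Fin s))
    (hright : Function.RightInverse Tinv T)
    (hT : ContDiff ℝ 1 T) (hTinv : ContDiff ℝ 1 Tinv)
    (K L : NNReal) (hK : LipschitzWith K T) (hL : LipschitzWith L Tinv)
    (ρ : ℝ) (hρ : 0 < ρ) :
    Integrable (fun x : Fin d → ℝ => Real.exp (-ρ * patchNR d s Np τ Tinv x)) volume := by
  obtain ⟨A, c, hc, hlog⟩ := exists_log_pushforwardDensity_le hright
    (hT.differentiable one_ne_zero) (hTinv.differentiable one_ne_zero) hK hL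
  have hρs : 0 < ρ / s := by positivity
  have hintegrable := integrable_exp_sum_comp_patch τ hcover
    (g := fun y => ρ / s * Real.log (pushforwardDensity s Tinv y)) (A := ρ / s * A)
    (c := ρ / s * c)
    ((Real.measurable_log.comp (continuous_pushforwardDensity hTinv).measurable).const_mul _)
    (by positivity) fun y => by
      have := mul_le_mul_of_nonneg_left (hlog y) hρs.le
      linarith
  convert hintegrable using 3 with x
  rw [patchNR, Finset.sum_neg_distrib, ← Finset.mul_sum]
  ring

/-- Proposition 1 of the paper: if every pixel is covered by at least
one patch and `T` is a bi-Lipschitz `C¹` diffeomorphism of `ℝ^s`, then for every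
`ρ > 0` the function `φ(x) = exp(-ρ · patchNR x)` is Lebesgue integrable on `ℝ^d`. -/
theorem stmt_6 (d s Np : ℕ) (hd : 0 < d) (hs : 0 < s) (hNp : 0 < Np) (hsd : s ≤ d)
    (τ : Fin Np → Fin s → Fin d) (hτ : ∀ i, Function.Injective (τ i))
    (hcover : ∀ k : Fin d, ∃ i j, τ i j = k)
    (T Tinv : EuclideanSpace ℝ (Fin s) → EuclideanSpace ℝ (Fin s))
    (hleft : Function.LeftInverse Tinv T) (hright : Function.RightInverse Tinv T)
    (hT : ContDiff ℝ 1 T) (hTinv : ContDiff ℝ 1 Tinv)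
    (K L : NNReal) (hK : LipschitzWith K T) (hL : LipschitzWith L Tinv)
    (ρ : ℝ) (hρ : 0 < ρ) :
    Integrable (fun x : Fin d → ℝ => Real.exp (-ρ * patchNR d s Np τ Tinv x)) volume :=
  stmt_6_general d s Np hs τ hcover T Tinv hright hT hTinv K L hK hL ρ hρ
end
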